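/- arXiv:1706.09870 — 3 statements merged into one kernel-verified Lean document; each statement's English description precedes it below -/
import Mathlib

section
/- The function Q : ℝ → ℝ defined by Q(x) = (3 / cosh²(2x))^{1/4} is smooth, strictly positive and even, and satisfies the ordinary differential equation Q''(x) + Q(x)⁵ = Q(x) for every x ∈ ℝ; moreover there exists C > 0 such that Q(x) + |Q'(x)| ≤ C e^{−|x|} for all x ∈ ℝ. -/
/-- The ground state `Q(x) = (3 / cosh²(2x))^{1/4}`. -/
noncomputable def Q (x : ℝ) : ℝ := (3 / Real.cosh (2 * x) ^ 2) ^ ((1 : ℝ) / 4)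

noncomputable def K : ℝ := (3 : ℝ) ^ ((1:ℝ)/4)

lemma K_pos : 0 < K := Real.rpow_pos_of_pos (by norm_num) _

lemma K_pow : K ^ 4 = 3 := by
  rw [K, ← Real.rpow_natCast ((3:ℝ) ^ ((1:ℝ)/4)) 4, ← Real.rpow_mul (by norm_num)]
  norm_num

lemma Qeq : Q = fun x => K * Real.cosh (2 * x) ^ (-(1:ℝ)/2) := by
  funext x
  have hc : (0:ℝ) < Real.cosh (2 * x) := Real.cosh_pos (2 * x)
  rw [Q, Real.div_rpow (by norm_num) (sq_nonneg _),
    ← Real.rpow_natCast (Real.cosh (2*x)) 2, ← Real.rpow_mul hc.le]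
  norm_num
  rw [Real.rpow_neg hc.le, div_eq_mul_inv, K]

lemma hasDerivAt_cosh2 (x : ℝ) :
    HasDerivAt (fun y => Real.cosh (2 * y)) (2 * Real.sinh (2 * x)) x := by
  have h := (Real.hasDerivAt_cosh (2 * x)).comp x ((hasDerivAt_id x).const_mul 2)
  simpa [Function.comp_def, mul_comm] using h

lemma hasDerivAt_coshpow (p : ℝ) (x : ℝ) :
    HasDerivAt (fun y => Real.cosh (2 * y) ^ p)
      (p * Real.cosh (2 * x) ^ (p - 1) * (2 * Real.sinh (2 * x))) x := by
  have h := (Real.hasDerivAt_rpow_const (x := Real.cosh (2*x)) (p := p) (Or.inl (Real.cosh_pos (2*x)).ne')).comp x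
    (hasDerivAt_cosh2 x)
  exact h

noncomputable def D (x : ℝ) : ℝ :=
  -K * Real.sinh (2 * x) * Real.cosh (2 * x) ^ (-(3:ℝ)/2)

lemma hasDerivAt_Q (x : ℝ) : HasDerivAt Q (D x) x := by
  rw [Qeq]
  have h := (hasDerivAt_coshpow (-(1:ℝ)/2) x).const_mul K
  refine h.congr_deriv ?_
  rw [D, show (-(1:ℝ)/2 - 1) = -(3:ℝ)/2 by norm_num]
  ring

lemma hasDerivAt_sinh2 (x : ℝ) :
    HasDerivAt (fun y => Real.sinh (2 * y)) (2 * Real.cosh (2 * x)) x := by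
  have h := (Real.hasDerivAt_sinh (2 * x)).comp x ((hasDerivAt_id x).const_mul 2)
  simpa [Function.comp_def, mul_comm] using h

lemma hasDerivAt_D (x : ℝ) : HasDerivAt D
    (-K * (2 * Real.cosh (2 * x)) * Real.cosh (2 * x) ^ (-(3:ℝ)/2)
      + -K * Real.sinh (2 * x) *
        (-(3:ℝ)/2 * Real.cosh (2 * x) ^ (-(3:ℝ)/2 - 1) * (2 * Real.sinh (2 * x)))) x := by
  have h := (((hasDerivAt_sinh2 x).const_mul (-K)).mul (hasDerivAt_coshpow (-(3:ℝ)/2) x))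
  exact h

lemma deriv_Q : deriv Q = D := funext fun x => (hasDerivAt_Q x).deriv

lemma ode (x : ℝ) : deriv (deriv Q) x + Q x ^ 5 = Q x := by
  rw [deriv_Q, (hasDerivAt_D x).deriv, Qeq]
  set c := Real.cosh (2 * x) with hcdef
  set s := Real.sinh (2 * x) with hsdef
  have hc : (0:ℝ) < c := Real.cosh_pos (2 * x)
  set u := c ^ (-(1:ℝ)/2) with hudef
  have h3 : c ^ (-(3:ℝ)/2) = u ^ 3 := by
    rw [hudef, ← Real.rpow_natCast (c ^ (-(1:ℝ)/2)) 3, ← Real.rpow_mul hc.le]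
    norm_num
  have h5 : c ^ (-(3:ℝ)/2 - 1) = u ^ 5 := by
    rw [hudef, ← Real.rpow_natCast (c ^ (-(1:ℝ)/2)) 5, ← Real.rpow_mul hc.le]
    norm_num
  have hu2 : c * u ^ 2 = 1 := by
    rw [hudef, ← Real.rpow_natCast (c ^ (-(1:ℝ)/2)) 2, ← Real.rpow_mul hc.le]
    norm_num
    rw [Real.rpow_neg_one]
    field_simp
  have hs : s ^ 2 = c ^ 2 - 1 := by
    rw [hsdef, hcdef, Real.sinh_sq]
  have hK : K ^ 4 = 3 := K_pow
  rw [h3, h5]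
  simp only []
  linear_combination (3*K*u^5) * hs + (K*u^5) * hK + (K*u*(3*c*u^2+1)) * hu2

lemma Q_smooth : ContDiff ℝ (⊤ : ℕ∞) Q := by
  rw [Qeq]
  have h : ContDiff ℝ (⊤ : ℕ∞) (fun x : ℝ => Real.cosh (2 * x)) :=
    Real.contDiff_cosh.comp (contDiff_const.mul contDiff_id)
  have h2 : ContDiff ℝ (⊤ : ℕ∞) (fun x : ℝ => Real.cosh (2 * x) ^ (-(1:ℝ)/2)) :=
    contDiff_iff_contDiffAt.2 fun x => by
      have h' := (Real.contDiffAt_rpow_const_of_ne (x := Real.cosh (2*x)) (p := -(1:ℝ)/2) (n := (⊤ : ℕ∞)) (Real.cosh_pos (2*x)).ne').comp x h.contDiffAt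
      exact h'
  exact contDiff_const.mul h2

lemma Q_pos (x : ℝ) : 0 < Q x := by
  rw [Qeq]
  exact mul_pos K_pos (Real.rpow_pos_of_pos (Real.cosh_pos _) _)

lemma Q_even (x : ℝ) : Q (-x) = Q x := by
  rw [Q, Q, show 2 * -x = -(2*x) by ring, Real.cosh_neg]

lemma ubound (x : ℝ) : Real.cosh (2*x) ^ (-(1:ℝ)/2) ≤ Real.sqrt 2 * Real.exp (-|x|) := by
  set c := Real.cosh (2 * x) with hcdef
  have hc : (0:ℝ) < c := Real.cosh_pos (2 * x)
  have epos : (0:ℝ) < Real.exp (2 * |x|) := Real.exp_pos _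
  have hcexp : Real.exp (2 * |x|) ≤ 2 * c := by
    have h1 : Real.exp (2*|x|) ≤ Real.exp (2*x) + Real.exp (-(2*x)) := by
      rcases abs_cases x with ⟨h, _⟩ | ⟨h, _⟩ <;> rw [h]
      · nlinarith [Real.exp_pos (-(2*x))]
      · rw [show 2 * -x = -(2*x) by ring]; nlinarith [Real.exp_pos (2*x)]
    rw [hcdef, Real.cosh_eq]; linarith
  have hu : (0:ℝ) ≤ c ^ (-(1:ℝ)/2) := (Real.rpow_pos_of_pos hc _).le
  have hsq : (c ^ (-(1:ℝ)/2)) ^ 2 = c⁻¹ := by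
    rw [← Real.rpow_natCast (c ^ (-(1:ℝ)/2)) 2, ← Real.rpow_mul hc.le]
    norm_num
    exact Real.rpow_neg_one c
  have he2 : Real.exp (-|x|) ^ 2 = (Real.exp (2 * |x|))⁻¹ := by
    rw [sq, ← Real.exp_add, ← Real.exp_neg]; congr 1; ring
  have hrhs : (0:ℝ) ≤ Real.sqrt 2 * Real.exp (-|x|) :=
    mul_nonneg (Real.sqrt_nonneg _) (Real.exp_pos _).le
  have key : (c ^ (-(1:ℝ)/2)) ^ 2 ≤ (Real.sqrt 2 * Real.exp (-|x|)) ^ 2 := by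
    rw [hsq, mul_pow, Real.sq_sqrt (by norm_num : (0:ℝ) ≤ 2), he2,
      inv_eq_one_div, inv_eq_one_div, mul_one_div, div_le_div_iff₀ hc epos]
    linarith
  calc c ^ (-(1:ℝ)/2) = Real.sqrt ((c ^ (-(1:ℝ)/2)) ^ 2) := (Real.sqrt_sq hu).symm
    _ ≤ Real.sqrt ((Real.sqrt 2 * Real.exp (-|x|)) ^ 2) := Real.sqrt_le_sqrt key
    _ = Real.sqrt 2 * Real.exp (-|x|) := Real.sqrt_sq hrhs

lemma decay (x : ℝ) : Q x + |deriv Q x| ≤ 2 * K * Real.sqrt 2 * Real.exp (-|x|) := by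
  rw [deriv_Q, Qeq]
  simp only []
  set c := Real.cosh (2*x) with hcdef
  set s := Real.sinh (2*x) with hsdef
  have hc : (0:ℝ) < c := Real.cosh_pos _
  have hs2 : s ^ 2 = c ^ 2 - 1 := Real.sinh_sq (2*x)
  have habs : |s| ≤ c := by nlinarith [sq_abs s, abs_nonneg s]
  have h3pos : (0:ℝ) < c ^ (-(3:ℝ)/2) := Real.rpow_pos_of_pos hc _
  have hDabs : |D x| = K * |s| * c ^ (-(3:ℝ)/2) := by
    rw [D, abs_mul, abs_mul, abs_neg, abs_of_pos K_pos, abs_of_pos h3pos]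
  have h31 : c * c ^ (-(3:ℝ)/2) = c ^ (-(1:ℝ)/2) := by
    have h := (Real.rpow_add hc 1 (-(3:ℝ)/2)).symm
    rw [Real.rpow_one] at h
    rw [h]; norm_num
  have hub := ubound x
  have hDle : |D x| ≤ K * c ^ (-(1:ℝ)/2) := by
    rw [hDabs, ← h31, ← mul_assoc]
    exact mul_le_mul_of_nonneg_right (mul_le_mul_of_nonneg_left habs K_pos.le) h3pos.le
  nlinarith [K_pos, hub, Real.rpow_pos_of_pos hc (-(1:ℝ)/2)]

/-- The ground state `Q` is smooth, strictly positive, even, satisfies `Q'' + Q⁵ = Q`,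
and together with its derivative decays exponentially. -/
theorem ground_state_properties :
    ContDiff ℝ (⊤ : ℕ∞) Q ∧ (∀ x : ℝ, 0 < Q x) ∧ (∀ x : ℝ, Q (-x) = Q x) ∧
    (∀ x : ℝ, deriv (deriv Q) x + Q x ^ 5 = Q x) ∧
    ∃ C : ℝ, 0 < C ∧ ∀ x : ℝ, Q x + |deriv Q x| ≤ C * Real.exp (-|x|) := by
  refine ⟨Q_smooth, Q_pos, Q_even, ode, 2 * K * Real.sqrt 2,
    mul_pos (mul_pos two_pos K_pos) (Real.sqrt_pos.2 (by norm_num)), decay⟩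
end

section
/- Let K ≥ 1, let ℓ₁ > ℓ₂ > … > ℓ_K > 0 and let ε₁,…,ε_K ∈ {−1,1}. Then Σ_{k=1}^K ℓ_k² ( 1/ℓ_k + 2 (ε_k/√ℓ_k) Σ_{j=1}^{k−1} ε_j/√ℓ_j ) = Σ_{k=1}^{K−1} (ℓ_k² − ℓ_{k+1}²) ( Σ_{j=1}^k ε_j/√ℓ_j )² + ℓ_K² ( Σ_{j=1}^K ε_j/√ℓ_j )², and in particular Σ_{k=1}^K ℓ_k ( 1 + 2 Σ_{j=1}^{k−1} ε_k ε_j √(ℓ_k/ℓ_j) ) > 0. -/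
/-! With `a_j = ε_j / √ℓ_j` and partial sums `S_k = a_1 + ⋯ + a_k`, the relation `a_k² = 1 / ℓ_k`
turns the `k`-th summand into `ℓ_k² (S_k² - S_{k-1}²)`. Summation by parts regroups the sum as
`Σ_{k<K} (ℓ_k² - ℓ_{k+1}²) S_k² + ℓ_K² S_K²`, a combination of squares with positive weights
whose first square `S_1² = 1 / ℓ_1` is nonzero. -/

open Finset

lemma sum_Icc_mul_sub_eq {R : Type*} [CommRing R] {K : ℕ} (hK : 1 ≤ K) (w g : ℕ → R) :
    ∑ k ∈ Icc 1 K, w k * (g (k + 1) - g k)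
      = ∑ k ∈ Icc 1 (K - 1), (w k - w (k + 1)) * g (k + 1) + w K * g (K + 1) - w 1 * g 1 := by
  obtain ⟨n, rfl⟩ := Nat.exists_eq_add_of_le' hK
  induction n with
  | zero => simp [mul_sub]
  | succ n ih =>
    rw [sum_Icc_succ_top (by omega), ih (by omega)]
    simp only [Nat.add_sub_cancel]
    rw [sum_Icc_succ_top (by omega : 1 ≤ n + 1)]
    ring

lemma sum_Icc_sub_mul_sq_add_mul_sq_pos {K : ℕ} (hK : 1 ≤ K) {w x : ℕ → ℝ} (hw : 0 < w K)
    (hw_anti : ∀ k, 1 ≤ k → k < K → w (k + 1) < w k) (hx : x 1 ≠ 0) :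
    0 < ∑ k ∈ Icc 1 (K - 1), (w k - w (k + 1)) * x k ^ 2 + w K * x K ^ 2 := by
  obtain rfl | hK2 := hK.eq_or_lt
  · simpa using mul_pos hw (pow_two_pos_of_ne_zero hx)
  have hsum : 0 < ∑ k ∈ Icc 1 (K - 1), (w k - w (k + 1)) * x k ^ 2 := by
    refine sum_pos' (fun k hk => ?_) ⟨1, by simp; omega, ?_⟩
    · rw [mem_Icc] at hk
      exact mul_nonneg (sub_nonneg.2 (hw_anti k hk.1 (by omega)).le) (sq_nonneg _)
    · exact mul_pos (sub_pos.2 (hw_anti 1 le_rfl hK2)) (pow_two_pos_of_ne_zero hx)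
  positivity

lemma div_sqrt_sq {ε ℓ : ℝ} (hε : ε ^ 2 = 1) (hℓ : 0 ≤ ℓ) : (ε / √ℓ) ^ 2 = 1 / ℓ := by
  rw [div_pow, hε, Real.sq_sqrt hℓ]

lemma mul_mul_sqrt_div {ε e ℓ m : ℝ} (hℓ : 0 ≤ ℓ) :
    ε * e * √(ℓ / m) = ℓ * (ε / √ℓ) * (e / √m) := by
  rw [Real.sqrt_div hℓ]
  linear_combination (-(ε * e / √m)) * Real.div_sqrt (x := ℓ)

section Summand

variable {ι : Type*} (s : Finset ι) (e m : ι → ℝ) {ε ℓ : ℝ}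

lemma energy_summand_eq_sq_sub_sq (hε : ε ^ 2 = 1) (hℓ : 0 ≤ ℓ) :
    ℓ ^ 2 * (1 / ℓ + 2 * (ε / √ℓ) * ∑ j ∈ s, e j / √(m j))
      = ℓ ^ 2 * ((∑ j ∈ s, e j / √(m j) + ε / √ℓ) ^ 2 - (∑ j ∈ s, e j / √(m j)) ^ 2) := by
  rw [← div_sqrt_sq hε hℓ]
  ring

lemma sqrt_energy_summand_eq (hℓ : 0 < ℓ) :
    ℓ * (1 + 2 * ∑ j ∈ s, ε * e j * √(ℓ / m j))
      = ℓ ^ 2 * (1 / ℓ + 2 * (ε / √ℓ) * ∑ j ∈ s, e j / √(m j)) := by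
  simp_rw [mul_mul_sqrt_div hℓ.le, mul_assoc ℓ, ← mul_sum]
  field_simp

end Summand

/-- Algebraic identity for the multi-bubble energy: for `ℓ₁ > … > ℓ_K > 0` and signs
`ε_k ∈ {-1,1}`, the energy sum `Σ_k ℓ_k²(1/ℓ_k + 2(ε_k/√ℓ_k) Σ_{j<k} ε_j/√ℓ_j)` admits an
Abel resummation as a positive combination of squares; in particular
`Σ_k ℓ_k (1 + 2 Σ_{j<k} ε_k ε_j √(ℓ_k/ℓ_j)) > 0`. -/
theorem multibubble_energy_positive (K : ℕ) (hK : 1 ≤ K) (ℓ ε : ℕ → ℝ)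
    (hℓpos : ∀ k ∈ Finset.Icc 1 K, 0 < ℓ k)
    (hℓmono : ∀ j ∈ Finset.Icc 1 K, ∀ k ∈ Finset.Icc 1 K, j < k → ℓ k < ℓ j)
    (hε : ∀ k ∈ Finset.Icc 1 K, ε k = 1 ∨ ε k = -1) :
    (∑ k ∈ Finset.Icc 1 K, ℓ k ^ 2 *
        (1 / ℓ k + 2 * (ε k / Real.sqrt (ℓ k)) *
          ∑ j ∈ Finset.Ico 1 k, ε j / Real.sqrt (ℓ j)))
      = (∑ k ∈ Finset.Icc 1 (K - 1), (ℓ k ^ 2 - ℓ (k + 1) ^ 2) *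
            (∑ j ∈ Finset.Icc 1 k, ε j / Real.sqrt (ℓ j)) ^ 2)
        + ℓ K ^ 2 * (∑ j ∈ Finset.Icc 1 K, ε j / Real.sqrt (ℓ j)) ^ 2 ∧
    0 < ∑ k ∈ Finset.Icc 1 K, ℓ k *
        (1 + 2 * ∑ j ∈ Finset.Ico 1 k, ε k * ε j * Real.sqrt (ℓ k / ℓ j)) := by
  have h_sq_sub_sq : ∀ k ∈ Icc 1 K, ℓ k ^ 2 * (1 / ℓ k + 2 * (ε k / √(ℓ k)) *
      ∑ j ∈ Ico 1 k, ε j / √(ℓ j)) = ℓ k ^ 2 * ((∑ j ∈ Ico 1 (k + 1), ε j / √(ℓ j)) ^ 2 -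
        (∑ j ∈ Ico 1 k, ε j / √(ℓ j)) ^ 2) := fun k hk => by
    rw [sum_Ico_succ_top (mem_Icc.1 hk).1]
    exact energy_summand_eq_sq_sub_sq (Ico 1 k) ε ℓ (sq_eq_one_iff.2 (hε k hk)) (hℓpos k hk).le
  have h_identity := (sum_congr rfl h_sq_sub_sq).trans (sum_Icc_mul_sub_eq hK (fun k => ℓ k ^ 2)
    fun k => (∑ j ∈ Ico 1 k, ε j / √(ℓ j)) ^ 2)
  simp only [Ico_add_one_right_eq_Icc, Ico_self, sum_empty, sq (0 : ℝ), mul_zero,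
    sub_zero] at h_identity
  refine ⟨h_identity, ?_⟩
  rw [sum_congr rfl fun k hk => sqrt_energy_summand_eq (Ico 1 k) ε ℓ (hℓpos k hk), h_identity]
  have h1 : 1 ∈ Icc 1 K := left_mem_Icc.2 hK
  refine sum_Icc_sub_mul_sq_add_mul_sq_pos hK (pow_pos (hℓpos K (right_mem_Icc.2 hK)) 2)
    (fun k hk hkK => ?_) ?_
  · have hk1 : k + 1 ∈ Icc 1 K := mem_Icc.2 ⟨by omega, hkK⟩
    exact pow_lt_pow_left₀ (hℓmono k (mem_Icc.2 ⟨hk, hkK.le⟩) _ hk1 k.lt_succ_self)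
      (hℓpos _ hk1).le two_ne_zero
  · rw [Icc_self, sum_singleton]
    exact div_ne_zero (by rcases hε 1 h1 with h | h <;> simp [h])
      (Real.sqrt_ne_zero'.2 (hℓpos 1 h1))
end

section
/- Let p ≥ 1 be an integer and let f : ℝ → ℝ be smooth with f^{(p)} ∈ L²(ℝ). Assume there exists C₁ > 0 such that |f^{(ℓ)}(x)| ≤ C₁ e^{−x} for every integer 0 ≤ ℓ ≤ p and every x > 0. Then for every 0 < κ < 1 and every 0 < σ < 1 − κ there exists a constant C > 0, depending only on p, κ, σ and C₁, such that for all x ∈ ℝ: |f(x)| e^{κ x} ≤ C ( ‖f^{(p)}‖_{L²}^σ + ‖f^{(p)}‖_{L²} ). -/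
open MeasureTheory

lemma cs_bound (G : ℝ → ℝ) (hmem : MemLp G 2 volume) (x a : ℝ) (hxa : x ≤ a) :
    ∫ t in x..a, |G t| ≤ Real.sqrt (a - x) * Real.sqrt (∫ z, G z ^ 2) := by
  have h2 : Real.HolderConjugate 2 2 := by constructor <;> norm_num
  rw [intervalIntegral.integral_of_le hxa]
  have hmr : MemLp (fun t => |G t|) 2 (volume.restrict (Set.Ioc x a)) :=
    (hmem.restrict _).abs
  have h1 : MemLp (fun _ : ℝ => (1:ℝ)) 2 (volume.restrict (Set.Ioc x a)) := memLp_const 1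
  have key := integral_mul_le_Lp_mul_Lq_of_nonneg (μ := volume.restrict (Set.Ioc x a)) h2
    (f := fun _ => (1:ℝ)) (g := fun t => |G t|)
    (Filter.Eventually.of_forall fun _ => zero_le_one)
    (Filter.Eventually.of_forall fun t => abs_nonneg _)
    (by simpa using h1) (by simpa using hmr)
  simp only [one_mul] at key
  refine key.trans ?_
  have e1 : (∫ _ : ℝ in Set.Ioc x a, (1:ℝ) ^ (2:ℝ)) = a - x := by
    simp [Real.volume_Ioc, ENNReal.toReal_ofReal (sub_nonneg.2 hxa), hxa]
  have e2 : (∫ t in Set.Ioc x a, |G t| ^ (2:ℝ)) = ∫ t in Set.Ioc x a, G t ^ 2 := by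
    refine integral_congr_ae (Filter.Eventually.of_forall fun t => ?_)
    have : |G t| ^ (2:ℝ) = |G t| ^ (2:ℕ) := by
      rw [← Real.rpow_natCast]; norm_num
    simp only [this, sq_abs]
  rw [e1, e2]
  have hint : Integrable (fun z => G z ^ 2) volume := hmem.integrable_sq
  have hle : (∫ t in Set.Ioc x a, G t ^ 2) ≤ ∫ z, G z ^ 2 :=
    setIntegral_le_integral hint (Filter.Eventually.of_forall fun t => sq_nonneg _)
  have hnn : (0:ℝ) ≤ ∫ t in Set.Ioc x a, G t ^ 2 :=
    integral_nonneg fun t => sq_nonneg _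
  rw [Real.sqrt_eq_rpow, Real.sqrt_eq_rpow]
  gcongr

lemma ftc_bound (f : ℝ → ℝ) (hf : ContDiff ℝ (⊤ : ℕ∞) f) (n : ℕ) (x a : ℝ) (hxa : x ≤ a) :
    |iteratedDeriv n f x| ≤ |iteratedDeriv n f a| + ∫ t in x..a, |iteratedDeriv (n+1) f t| := by
  have hcont : Continuous (iteratedDeriv (n+1) f) := hf.continuous_iteratedDeriv _ (by exact_mod_cast le_top)
  have hderiv : ∀ t ∈ Set.uIcc x a, HasDerivAt (iteratedDeriv n f) (iteratedDeriv (n+1) f t) t := by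
    intro t _
    have hd : DifferentiableAt ℝ (iteratedDeriv n f) t :=
      (hf.differentiable_iteratedDeriv n (by exact_mod_cast ENat.coe_lt_top n)).differentiableAt
    have := hd.hasDerivAt
    rwa [show deriv (iteratedDeriv n f) t = iteratedDeriv (n+1) f t by
      rw [iteratedDeriv_succ]] at this
  have hFTC := intervalIntegral.integral_eq_sub_of_hasDerivAt hderiv
    (hcont.intervalIntegrable x a)
  have habs : |∫ t in x..a, iteratedDeriv (n+1) f t| ≤ ∫ t in x..a, |iteratedDeriv (n+1) f t| :=
    intervalIntegral.abs_integral_le_integral_abs hxa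
  have : iteratedDeriv n f x = iteratedDeriv n f a - ∫ t in x..a, iteratedDeriv (n+1) f t := by
    rw [hFTC]; ring
  rw [this]
  calc |iteratedDeriv n f a - ∫ t in x..a, iteratedDeriv (n+1) f t|
      ≤ |iteratedDeriv n f a| + |∫ t in x..a, iteratedDeriv (n+1) f t| := abs_sub _ _
    _ ≤ _ := by linarith

lemma key_ind (p : ℕ) (C₁ : ℝ) (f : ℝ → ℝ) (hf : ContDiff ℝ (⊤ : ℕ∞) f)
    (hmem : MemLp (iteratedDeriv p f) 2 volume)
    (a : ℝ) (hbd : ∀ l : ℕ, l ≤ p → |iteratedDeriv l f a| ≤ C₁ * Real.exp (-a)) :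
    ∀ k : ℕ, 1 ≤ k → k ≤ p → ∀ x : ℝ, x ≤ a →
      |iteratedDeriv (p - k) f x|
        ≤ (C₁ * Real.exp (-a) + Real.sqrt (∫ z, iteratedDeriv p f z ^ 2))
          * (1 + (a - x)) ^ k := by
  set M := Real.sqrt (∫ z, iteratedDeriv p f z ^ 2) with hM
  have hM0 : 0 ≤ M := Real.sqrt_nonneg _
  set E := C₁ * Real.exp (-a) with hE
  have hE0 : 0 ≤ E := le_trans (abs_nonneg _) (hbd 0 (Nat.zero_le _) |>.trans_eq rfl)
  intro k hk1
  induction k, hk1 using Nat.le_induction with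
  | base =>
    intro hkp x hx
    have hs0 : 0 ≤ a - x := sub_nonneg.2 hx
    have h1 : |iteratedDeriv (p-1) f x| ≤ |iteratedDeriv (p-1) f a| + ∫ t in x..a, |iteratedDeriv p f t| := by
      have := ftc_bound f hf (p-1) x a hx
      rwa [show p - 1 + 1 = p from Nat.succ_pred_eq_of_pos hkp] at this
    have h2 := cs_bound _ hmem x a hx
    have h3 : Real.sqrt (a - x) ≤ 1 + (a - x) := by
      have := Real.sqrt_le_sqrt (show a - x ≤ (1 + (a-x))^2 by nlinarith)
      rwa [Real.sqrt_sq (by linarith)] at this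
    have h4 := hbd (p-1) (Nat.sub_le _ _)
    have hcs : ∫ t in x..a, |iteratedDeriv p f t| ≤ (1 + (a-x)) * M := by
      calc _ ≤ Real.sqrt (a - x) * M := h2
        _ ≤ (1 + (a-x)) * M := by apply mul_le_mul_of_nonneg_right h3 hM0
    calc |iteratedDeriv (p-1) f x| ≤ E + (1 + (a-x)) * M := by
          refine h1.trans ?_; exact add_le_add h4 hcs
      _ ≤ (E + M) * (1 + (a - x)) ^ 1 := by ring_nf; nlinarith
  | succ k hk1 ih =>
    intro hkp x hx
    have hkp' : k ≤ p := le_trans (Nat.le_succ k) hkp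
    have hs0 : 0 ≤ a - x := sub_nonneg.2 hx
    set l := p - (k+1) with hl
    have hll : l + 1 = p - k := by omega
    have h1 : |iteratedDeriv l f x| ≤ |iteratedDeriv l f a| + ∫ t in x..a, |iteratedDeriv (l+1) f t| :=
      ftc_bound f hf l x a hx
    have hbdint : ∀ t ∈ Set.Icc x a, |iteratedDeriv (l+1) f t| ≤ (E + M) * (1 + (a - x)) ^ k := by
      intro t ht
      have h := ih hkp' t ht.2
      rw [← hll] at h
      refine h.trans ?_
      have h5 : (1 + (a - t)) ^ k ≤ (1 + (a - x)) ^ k := by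
        apply pow_le_pow_left₀ (by linarith [ht.2]) (by linarith [ht.1])
      exact mul_le_mul_of_nonneg_left h5 (by positivity)
    have hcont : Continuous (iteratedDeriv (l+1) f) := hf.continuous_iteratedDeriv _ (by exact_mod_cast le_top)
    have hint : ∫ t in x..a, |iteratedDeriv (l+1) f t| ≤ (a - x) * ((E + M) * (1 + (a - x)) ^ k) := by
      have := intervalIntegral.integral_mono_on hx (hcont.abs.intervalIntegrable x a)
        (intervalIntegrable_const (μ := volume)) hbdint
      rw [intervalIntegral.integral_const, smul_eq_mul] at this
      linarith
    have h4 := hbd l (by omega)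
    have hpow : (1:ℝ) ≤ (1 + (a - x)) ^ k := one_le_pow₀ (by linarith)
    calc |iteratedDeriv l f x| ≤ E + (a - x) * ((E + M) * (1 + (a - x)) ^ k) := by
          refine h1.trans (add_le_add h4 hint)
      _ ≤ (E + M) * (1 + (a - x)) ^ (k+1) := by
          rw [pow_succ]
          nlinarith [hpow, hs0, hE0, hM0]

lemma star_bound (p : ℕ) (hp : 1 ≤ p) (κ C₁ : ℝ) (hκ0 : 0 < κ) (hκ1 : κ < 1) (hC₁ : 0 < C₁)
    (f : ℝ → ℝ) (hf : ContDiff ℝ (⊤ : ℕ∞) f)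
    (hmem : MemLp (iteratedDeriv p f) 2 volume)
    (hdecay : ∀ l : ℕ, l ≤ p → ∀ x : ℝ, 0 < x → |iteratedDeriv l f x| ≤ C₁ * Real.exp (-x))
    (a : ℝ) (ha : 1 ≤ a) (x : ℝ) :
    |f x| * Real.exp (κ * x)
      ≤ (1 + p / κ) ^ p * (C₁ * Real.exp ((κ - 1) * a)
          + Real.sqrt (∫ z, iteratedDeriv p f z ^ 2) * Real.exp (κ * a)) := by
  set M := Real.sqrt (∫ z, iteratedDeriv p f z ^ 2) with hM
  have hM0 : 0 ≤ M := Real.sqrt_nonneg _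
  have ha0 : (0:ℝ) < a := lt_of_lt_of_le one_pos ha
  have hK1 : (1:ℝ) ≤ (1 + p / κ) ^ p := one_le_pow₀ (le_add_of_nonneg_right (by positivity))
  rcases le_or_gt x a with hx | hx
  · -- x ≤ a : use the induction lemma
    have hb := key_ind p C₁ f hf hmem a (fun l hl => hdecay l hl a ha0) p hp le_rfl x hx
    rw [Nat.sub_self, iteratedDeriv_zero] at hb
    set s := a - x with hs
    have hs0 : 0 ≤ s := sub_nonneg.2 hx
    -- (1+s)^p ≤ (1+p/κ)^p * exp (κ * s)
    have h1 : (1 + s) ≤ (1 + p / κ) * Real.exp (κ * s / p) := by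
      have hu0 : 0 ≤ κ * s / p := by positivity
      have he : 1 + κ * s / p ≤ Real.exp (κ * s / p) := Real.add_one_le_exp _ |>.trans_eq' (by ring)
      have hps : (0:ℝ) < p := by exact_mod_cast hp
      have hsval : (p / κ) * (κ * s / p) = s := by field_simp
      have hc : (0:ℝ) ≤ 1 + p / κ := by positivity
      have hmm := mul_le_mul_of_nonneg_left he hc
      nlinarith [div_nonneg hps.le hκ0.le]
    have h2 : (1 + s) ^ p ≤ ((1 + p / κ) * Real.exp (κ * s / p)) ^ p :=
      pow_le_pow_left₀ (by linarith) h1 p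
    have h3 : ((1 + p / κ) * Real.exp (κ * s / p)) ^ p
        = (1 + p / κ) ^ p * Real.exp (κ * s) := by
      rw [mul_pow, ← Real.exp_nat_mul]
      congr 2
      have hps : (p:ℝ) ≠ 0 := by positivity
      field_simp
    have h4 : |f x| ≤ (C₁ * Real.exp (-a) + M) * ((1 + p / κ) ^ p * Real.exp (κ * s)) := by
      refine hb.trans ?_
      have := h2.trans_eq h3
      exact mul_le_mul_of_nonneg_left this (by positivity)
    have h5 : |f x| * Real.exp (κ * x)
        ≤ (C₁ * Real.exp (-a) + M) * ((1 + p / κ) ^ p * Real.exp (κ * s)) * Real.exp (κ * x) :=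
      mul_le_mul_of_nonneg_right h4 (Real.exp_nonneg _)
    refine h5.trans_eq ?_
    rw [show Real.exp ((κ - 1) * a) = Real.exp (-a) * (Real.exp (κ * s) * Real.exp (κ * x)) from by
        rw [← Real.exp_add, ← Real.exp_add]; congr 1; simp only [hs]; ring,
      show Real.exp (κ * a) = Real.exp (κ * s) * Real.exp (κ * x) from by
        rw [← Real.exp_add]; congr 1; simp only [hs]; ring]
    ring
  · -- a < x : direct decay
    have hx0 : 0 < x := lt_trans ha0 hx
    have hd := hdecay 0 (Nat.zero_le _) x hx0
    rw [iteratedDeriv_zero] at hd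
    have h1 : |f x| * Real.exp (κ * x) ≤ C₁ * Real.exp ((κ - 1) * x) := by
      calc |f x| * Real.exp (κ * x) ≤ (C₁ * Real.exp (-x)) * Real.exp (κ * x) :=
            mul_le_mul_of_nonneg_right hd (Real.exp_nonneg _)
        _ = C₁ * Real.exp ((κ - 1) * x) := by rw [mul_assoc, ← Real.exp_add]; ring_nf
    have h2 : Real.exp ((κ - 1) * x) ≤ Real.exp ((κ - 1) * a) := by
      apply Real.exp_le_exp.2
      nlinarith
    have : C₁ * Real.exp ((κ - 1) * x) ≤ C₁ * Real.exp ((κ - 1) * a) :=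
      mul_le_mul_of_nonneg_left h2 hC₁.le
    refine h1.trans (this.trans ?_)
    have t1 : C₁ * Real.exp ((κ-1)*a) ≤ (1 + p / κ) ^ p * (C₁ * Real.exp ((κ-1)*a)) :=
      le_mul_of_one_le_left (by positivity) hK1
    have t2 : 0 ≤ (1 + p / κ) ^ p * (M * Real.exp (κ*a)) := by positivity
    rw [mul_add]
    linarith

/-- Weighted pointwise bound from decay on the right and an `L²` bound on a high
derivative: if `f` is smooth, `f^{(p)} ∈ L²`, and `|f^{(ℓ)}(x)| ≤ C₁ e^{-x}` for
`0 ≤ ℓ ≤ p` and `x > 0`, then for `0 < κ < 1` and `0 < σ < 1 - κ` one has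
`|f(x)| e^{κx} ≤ C (‖f^{(p)}‖_{L²}^σ + ‖f^{(p)}‖_{L²})` with `C = C(p,κ,σ,C₁)`. -/
theorem weighted_bound_from_right_decay (p : ℕ) (hp : 1 ≤ p) (κ σ C₁ : ℝ)
    (hκ0 : 0 < κ) (hκ1 : κ < 1) (hσ0 : 0 < σ) (hσ1 : σ < 1 - κ) (hC₁ : 0 < C₁) :
    ∃ C : ℝ, 0 < C ∧ ∀ f : ℝ → ℝ, ContDiff ℝ (⊤ : ℕ∞) f →
      MemLp (iteratedDeriv p f) 2 volume →
      (∀ l : ℕ, l ≤ p → ∀ x : ℝ, 0 < x → |iteratedDeriv l f x| ≤ C₁ * Real.exp (-x)) →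
      ∀ x : ℝ, |f x| * Real.exp (κ * x)
        ≤ C * (Real.sqrt (∫ z, iteratedDeriv p f z ^ 2) ^ σ
            + Real.sqrt (∫ z, iteratedDeriv p f z ^ 2)) := by
  refine ⟨(1 + p / κ) ^ p * (C₁ + Real.exp 1), by positivity, ?_⟩
  intro f hf hmem hdecay x
  set K := (1 + (p:ℝ) / κ) ^ p with hKdef
  have hK0 : 0 < K := by positivity
  have hK1 : (1:ℝ) ≤ K := one_le_pow₀ (le_add_of_nonneg_right (by positivity))
  set M := Real.sqrt (∫ z, iteratedDeriv p f z ^ 2) with hMdef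
  have hM0 : 0 ≤ M := Real.sqrt_nonneg _
  have hstar := star_bound p hp κ C₁ hκ0 hκ1 hC₁ f hf hmem hdecay
  rcases eq_or_lt_of_le hM0 with hM | hM
  · -- M = 0 : limit argument
    have hlim : Filter.Tendsto (fun a : ℝ => K * (C₁ * Real.exp ((κ - 1) * a)))
        Filter.atTop (nhds 0) := by
      have h1 : Filter.Tendsto (fun a : ℝ => (κ - 1) * a) Filter.atTop Filter.atBot :=
        Filter.Tendsto.const_mul_atTop_of_neg (by linarith) Filter.tendsto_id
      have h2 := Real.tendsto_exp_atBot.comp h1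
      have := h2.const_mul (K * C₁)
      simpa [mul_assoc, Function.comp] using this
    have hev : ∀ᶠ a in Filter.atTop, |f x| * Real.exp (κ * x)
        ≤ K * (C₁ * Real.exp ((κ - 1) * a)) := by
      filter_upwards [Filter.eventually_ge_atTop 1] with a ha
      have h := hstar a ha x
      rw [← hMdef, ← hM] at h
      simpa using h
    have hle0 : |f x| * Real.exp (κ * x) ≤ 0 := ge_of_tendsto hlim hev
    have hσz : M ^ σ = 0 := by rw [← hM, Real.zero_rpow hσ0.ne']
    rw [hσz, ← hM]
    simpa using hle0
  · rcases le_or_gt 1 M with hM1 | hM1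
    · -- M ≥ 1 : take a = 1
      have h := hstar 1 le_rfl x
      have e1 : Real.exp ((κ - 1) * 1) ≤ 1 := by
        rw [Real.exp_le_one_iff]; linarith
      have e2 : Real.exp (κ * 1) ≤ Real.exp 1 := Real.exp_le_exp.2 (by linarith)
      have hMσ : 0 ≤ M ^ σ := Real.rpow_nonneg hM0 _
      have hb : |f x| * Real.exp (κ * x) ≤ K * (C₁ * M + M * Real.exp 1) := by
        refine h.trans ?_
        have : C₁ * Real.exp ((κ - 1) * 1) + M * Real.exp (κ * 1)
            ≤ C₁ * M + M * Real.exp 1 := by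
          have := mul_le_mul_of_nonneg_left e2 hM0
          nlinarith [Real.exp_pos ((κ-1)*1)]
        exact mul_le_mul_of_nonneg_left this hK0.le
      refine hb.trans ?_
      have heq : K * (C₁ * M + M * Real.exp 1) = K * (C₁ + Real.exp 1) * M := by ring
      rw [heq]
      exact mul_le_mul_of_nonneg_left (le_add_of_nonneg_left hMσ) (by positivity)
    · -- 0 < M < 1 : take a = 1 - log M
      have hlog : Real.log M < 0 := Real.log_neg hM hM1
      set a := 1 - Real.log M with hadef
      have ha : 1 ≤ a := by simp only [hadef]; linarith
      have h := hstar a ha x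
      have e1 : Real.exp ((κ - 1) * a) = Real.exp (κ - 1) * M ^ (1 - κ) := by
        rw [Real.rpow_def_of_pos hM, ← Real.exp_add]
        congr 1; simp only [hadef]; ring
      have e2 : M * Real.exp (κ * a) = Real.exp κ * M ^ (1 - κ) := by
        conv_lhs => rw [← Real.exp_log hM]
        rw [Real.rpow_def_of_pos hM, ← Real.exp_add, ← Real.exp_add]
        congr 1; simp only [hadef]; ring
      have hpow : M ^ (1 - κ) ≤ M ^ σ :=
        Real.rpow_le_rpow_of_exponent_ge hM hM1.le (by linarith)
      have hMσ0 : 0 ≤ M ^ σ := Real.rpow_nonneg hM0 _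
      have hb : |f x| * Real.exp (κ * x) ≤ K * (C₁ * M ^ σ + Real.exp 1 * M ^ σ) := by
        refine h.trans ?_
        rw [e1, e2]
        have hpn : 0 ≤ M ^ (1 - κ) := Real.rpow_nonneg hM0 _
        have c1 : C₁ * (Real.exp (κ - 1) * M ^ (1 - κ)) ≤ C₁ * M ^ σ := by
          have he : Real.exp (κ - 1) ≤ 1 := by rw [Real.exp_le_one_iff]; linarith
          refine mul_le_mul_of_nonneg_left ?_ hC₁.le
          nlinarith [mul_le_mul_of_nonneg_right he hpn]
        have c2 : Real.exp κ * M ^ (1 - κ) ≤ Real.exp 1 * M ^ σ := by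
          have he : Real.exp κ ≤ Real.exp 1 := Real.exp_le_exp.2 (by linarith)
          exact mul_le_mul he hpow hpn (Real.exp_nonneg 1)
        have : C₁ * (Real.exp (κ - 1) * M ^ (1 - κ)) + Real.exp κ * M ^ (1 - κ)
            ≤ C₁ * M ^ σ + Real.exp 1 * M ^ σ := add_le_add c1 c2
        refine le_trans (le_of_eq ?_) (mul_le_mul_of_nonneg_left this hK0.le)
        ring
      refine hb.trans ?_
      have heq : K * (C₁ * M ^ σ + Real.exp 1 * M ^ σ) = K * (C₁ + Real.exp 1) * M ^ σ := by ring
      rw [heq]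
      exact mul_le_mul_of_nonneg_left (le_add_of_nonneg_right hM0) (by positivity)
end
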